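/- Let p₁ = a² + 3b² and p₂ = c² + 3d² be distinct odd primes, π₁ = a + b(i+j+k), π₂ = c + d(i+j+k) in H(K₁). Then H(K₁)/⟨π₁π₂⟩ is isomorphic to ℤ/(p₁p₂)ℤ. -/

import Mathlib

open Quaternion

def HK1 : Subring ℍ[ℤ] where
  carrier := {q | ∃ a b : ℤ, q = ⟨a, b, b, b⟩}
  mul_mem' := by
    rintro _ _ ⟨a, b, rfl⟩ ⟨c, d, rfl⟩
    refine ⟨a*c - 3*b*d, a*d + b*c, ?_⟩
    show (⟨a,b,b,b⟩ : ℍ[ℤ]) * ⟨c,d,d,d⟩ = ⟨a*c - 3*b*d, a*d + b*c, a*d + b*c, a*d + b*c⟩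
    ext <;> simp <;> ring
  one_mem' := ⟨1, 0, by ext <;> simp⟩
  add_mem' := by
    rintro _ _ ⟨a, b, rfl⟩ ⟨c, d, rfl⟩
    exact ⟨a + c, b + d, by ext <;> rfl⟩
  zero_mem' := ⟨0, 0, by ext <;> simp⟩
  neg_mem' := by
    rintro _ ⟨a, b, rfl⟩
    exact ⟨-a, -b, by ext <;> rfl⟩

noncomputable instance : CommRing HK1 :=
  { (inferInstance : Ring HK1) with
    mul_comm := by
      rintro ⟨_, a, b, rfl⟩ ⟨_, c, d, rfl⟩
      apply Subtype.ext
      show (⟨a,b,b,b⟩ : ℍ[ℤ]) * ⟨c,d,d,d⟩ = (⟨c,d,d,d⟩ : ℍ[ℤ]) * ⟨a,b,b,b⟩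
      ext <;> simp <;> ring }

/-!
Since `(i + j + k)² = -3`, the ring `H(K₁)` is `ℤ[√-3]`. For `π ∈ ℤ[√d]` of prime norm `p`,
`p ∤ Im π`, so `t = -Re π / Im π` is a square root of `d` in `ZMod p`, and evaluation at `√d = t`
is a surjection `ℤ[√d] → ZMod p` with kernel `(π)`: if `x` is in the kernel then `p ∣ x · π̄`, and
dividing `p · x = π · (x · π̄)` by `p` gives `π ∣ x`. As `p₁ = π₁ π̄₁` and `p₂ = π₂ π̄₂` are coprime,
so are `π₁` and `π₂`, and the Chinese remainder theorem (twice) finishes.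
-/

namespace Zsqrtd

variable {d : ℤ}

theorem isCoprime_of_isCoprime_norm {x y : ℤ√d} (h : IsCoprime x.norm y.norm) :
    IsCoprime x y := by
  have h' := h.map (Int.castRingHom (ℤ√d))
  simp only [eq_intCast, norm_eq_mul_conj] at h'
  exact h'.of_mul_left_left.of_mul_right_left

theorem not_dvd_im_of_norm_eq_prime {p : ℕ} (hp : p.Prime) {π : ℤ√d} (hπ : π.norm = p) :
    ¬(p : ℤ) ∣ π.im := by
  intro him
  have hp' : Prime (p : ℤ) := Nat.prime_iff_prime_int.mp hp
  have hre : (p : ℤ) ∣ π.re := by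
    refine hp'.dvd_of_dvd_pow (n := 2) ?_
    have hsq : π.re ^ 2 = p + d * π.im * π.im := by rw [← hπ, norm_def]; ring
    rw [hsq]
    exact dvd_add dvd_rfl (dvd_mul_of_dvd_right him _)
  have hpp : (p : ℤ) * p ∣ p * 1 := by
    rw [mul_one]
    nth_rewrite 3 [← hπ]
    rw [norm_def]
    exact dvd_sub (mul_dvd_mul hre hre) (mul_dvd_mul (dvd_mul_of_dvd_right him _) him)
  exact hp'.not_dvd_one ((mul_dvd_mul_iff_left (by exact_mod_cast hp.ne_zero)).mp hpp)

theorem exists_lift_eq_zero_of_norm_eq_prime {p : ℕ} [Fact p.Prime] {π : ℤ√d}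
    (hπ : π.norm = p) : ∃ r : {r : ZMod p // r * r = d}, lift r π = 0 := by
  have him : (π.im : ZMod p) ≠ 0 := by
    rw [Ne, ZMod.intCast_zmod_eq_zero_iff_dvd]
    exact not_dvd_im_of_norm_eq_prime Fact.out hπ
  have hnorm : (π.re : ZMod p) * π.re - d * π.im * π.im = 0 := by
    have := congrArg (Int.cast : ℤ → ZMod p) hπ
    push_cast [norm_def, ZMod.natCast_self] at this
    exact this
  refine ⟨⟨-π.re / π.im, ?_⟩, ?_⟩
  · field_simp
    linear_combination hnorm
  · simp only [lift_apply_apply]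
    field_simp
    ring

theorem ker_lift_eq_span_singleton {p : ℕ} (hp : p ≠ 0) {π : ℤ√d} (hπ : π.norm = p)
    (r : {r : ZMod p // r * r = d}) (hr : lift r π = 0) :
    RingHom.ker (lift r) = Ideal.span {π} := by
  ext x
  rw [RingHom.mem_ker, Ideal.mem_span_singleton]
  constructor
  · intro hx
    simp only [lift_apply_apply] at hx hr
    obtain ⟨z, hz⟩ : ((p : ℤ) : ℤ√d) ∣ x * star π := by
      rw [intCast_dvd, ← ZMod.intCast_zmod_eq_zero_iff_dvd,
        ← ZMod.intCast_zmod_eq_zero_iff_dvd]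
      simp only [re_mul, im_mul, re_star, im_star, Int.cast_add, Int.cast_mul, Int.cast_neg]
      constructor
      · linear_combination π.re * hx - x.im * r * hr + x.im * π.im * r.2
      · linear_combination -π.im * hx + x.im * hr
    refine ⟨z, Zsqrtd.eq_of_smul_eq_smul_left (a := p) (by exact_mod_cast hp) ?_⟩
    calc ((p : ℤ) : ℤ√d) * x = π * (x * star π) := by rw [← hπ, norm_eq_mul_conj]; ring
      _ = _ := by rw [hz]; ring
  · rintro ⟨z, rfl⟩
    rw [map_mul, hr, zero_mul]

theorem nonempty_quotient_span_equiv_zmod {p : ℕ} (hp : p.Prime) {π : ℤ√d}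
    (hπ : π.norm = p) : Nonempty (ℤ√d ⧸ Ideal.span {π} ≃+* ZMod p) := by
  have := Fact.mk hp
  obtain ⟨r, hr⟩ := exists_lift_eq_zero_of_norm_eq_prime hπ
  rw [← ker_lift_eq_span_singleton hp.ne_zero hπ r hr]
  exact ⟨RingHom.quotientKerEquivOfSurjective (ZMod.ringHom_surjective _)⟩

theorem nonempty_quotient_span_mul_equiv_zmod {p₁ p₂ : ℕ} (hp₁ : p₁.Prime) (hp₂ : p₂.Prime)
    (hcop : p₁.Coprime p₂) {π₁ π₂ : ℤ√d} (hπ₁ : π₁.norm = p₁) (hπ₂ : π₂.norm = p₂) :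
    Nonempty (ℤ√d ⧸ Ideal.span {π₁ * π₂} ≃+* ZMod (p₁ * p₂)) := by
  obtain ⟨e₁⟩ := nonempty_quotient_span_equiv_zmod hp₁ hπ₁
  obtain ⟨e₂⟩ := nonempty_quotient_span_equiv_zmod hp₂ hπ₂
  have hπ : IsCoprime (Ideal.span {π₁}) (Ideal.span {π₂}) := by
    rw [Ideal.isCoprime_span_singleton_iff]
    apply isCoprime_of_isCoprime_norm
    rwa [hπ₁, hπ₂, Nat.isCoprime_iff_coprime]
  rw [← Ideal.span_singleton_mul_span_singleton]
  exact ⟨(Ideal.quotientMulEquivQuotientProd _ _ hπ).trans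
    ((e₁.prodCongr e₂).trans (ZMod.chineseRemainder hcop).symm)⟩

end Zsqrtd

noncomputable def HK1.equivZsqrtd : HK1 ≃+* ℤ√(-3) where
  toFun x := ⟨(x : ℍ[ℤ]).re, (x : ℍ[ℤ]).imI⟩
  invFun z := ⟨⟨z.re, z.im, z.im, z.im⟩, z.re, z.im, rfl⟩
  left_inv := by rintro ⟨_, a, b, rfl⟩; rfl
  right_inv _ := rfl
  map_mul' := by
    rintro ⟨_, a, b, rfl⟩ ⟨_, c, d, rfl⟩
    change (⟨((⟨a,b,b,b⟩ : ℍ[ℤ]) * ⟨c,d,d,d⟩).re, ((⟨a,b,b,b⟩ : ℍ[ℤ]) * ⟨c,d,d,d⟩).imI⟩ : ℤ√(-3))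
      = ⟨a, b⟩ * ⟨c, d⟩
    ext <;> simp; ring
  map_add' := by
    rintro ⟨_, a, b, rfl⟩ ⟨_, c, d, rfl⟩
    rfl

theorem HK1_quot_mul_iso_general (a b c d : ℤ) (p₁ p₂ : ℕ) (hp₁ : p₁.Prime) (hp₂ : p₂.Prime)
    (hne : p₁ ≠ p₂)
    (h₁ : (p₁ : ℤ) = a ^ 2 + 3 * b ^ 2) (h₂ : (p₂ : ℤ) = c ^ 2 + 3 * d ^ 2) :
    Nonempty ((HK1 ⧸ Ideal.span
        {(⟨⟨a, b, b, b⟩, ⟨a, b, rfl⟩⟩ : HK1) * ⟨⟨c, d, d, d⟩, ⟨c, d, rfl⟩⟩}) ≃+*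
      ZMod (p₁ * p₂)) := by
  have hnorm {p : ℕ} {x y : ℤ} (h : (p : ℤ) = x ^ 2 + 3 * y ^ 2) :
      (⟨x, y⟩ : ℤ√(-3)).norm = p := by
    rw [Zsqrtd.norm_def, h]; ring
  obtain ⟨e⟩ := Zsqrtd.nonempty_quotient_span_mul_equiv_zmod hp₁ hp₂
    ((Nat.coprime_primes hp₁ hp₂).mpr hne) (hnorm h₁) (hnorm h₂)
  refine ⟨(Ideal.quotientEquiv _ _ HK1.equivZsqrtd ?_).trans e⟩
  rw [Ideal.map_span, Set.image_singleton, map_mul]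
  rfl

theorem HK1_quot_mul_iso (a b c d : ℤ) (p₁ p₂ : ℕ) (hp₁ : p₁.Prime) (hp₂ : p₂.Prime)
    (hodd₁ : Odd p₁) (hodd₂ : Odd p₂) (hne : p₁ ≠ p₂)
    (h₁ : (p₁ : ℤ) = a ^ 2 + 3 * b ^ 2) (h₂ : (p₂ : ℤ) = c ^ 2 + 3 * d ^ 2) :
    Nonempty ((HK1 ⧸ Ideal.span
        {(⟨⟨a, b, b, b⟩, ⟨a, b, rfl⟩⟩ : HK1) * ⟨⟨c, d, d, d⟩, ⟨c, d, rfl⟩⟩}) ≃+*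
      ZMod (p₁ * p₂)) :=
  HK1_quot_mul_iso_general a b c d p₁ p₂ hp₁ hp₂ hne h₁ h₂
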